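/- Let G be a linearly ordered abelian group. Every nonzero series b in K((G)) has a unique weak normal form: there exist unique n ≥ 1 and unique series b₁, …, bₙ ∈ K((G)) such that each bᵢ is weakly principal, ot(b₁) ≥ ot(b₂) ≥ … ≥ ot(bₙ), every element of supp(bᵢ) is strictly less than every element of supp(b_{i+1}) for i = 1, …, n−1, and b = b₁ + … + bₙ. -/

import Mathlib

open Ordinal

/-- The ordinal order type of a well-ordered subset of a linear order. -/
noncomputable def orderTypeSet {Γ : Type*} [LinearOrder Γ] (s : Set Γ) (hs : s.IsWF) : Ordinal :=
  letI : IsWellFounded s (· < ·) := ⟨hs⟩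
  Ordinal.type ((· < ·) : s → s → Prop)

/-- The order type `ot b` of the support of a Hahn series. -/
noncomputable def HahnSeries.ot {Γ : Type*} [LinearOrder Γ] {R : Type*} [Zero R]
    (b : HahnSeries Γ R) : Ordinal :=
  orderTypeSet b.support b.isWF_support

/-- The degree of a Hahn series: the largest ordinal `β` with `ω ^ β ≤ ot b`
(for a nonzero series), implemented as the base-`ω` ordinal logarithm of `ot b`. -/
noncomputable def HahnSeries.deg {Γ : Type*} [LinearOrder Γ] {R : Type*} [Zero R]
    (b : HahnSeries Γ R) : Ordinal :=
  Ordinal.log Ordinal.omega0 b.ot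

/-- A nonzero series is weakly principal if its order type is `ω ^ α` for some ordinal `α`. -/
def weaklyPrincipal {Γ : Type*} [LinearOrder Γ] {R : Type*} [Zero R]
    (b : HahnSeries Γ R) : Prop :=
  ∃ α : Ordinal, b.ot = Ordinal.omega0 ^ α

/-!
Order types of separated supports add. Existence: if `ot b = γ` is not a power of `ω`, cut `supp b`
at the initial segment of order type `ω ^ log ω γ`; the remaining piece has order type
`γ - ω ^ log ω γ < γ`, so recursion on `γ` applies. Uniqueness: in a weak normal form the later
summands have order type at most `ω ^ α = ot b₁`, and `ω ^ (α + 1)` is additively principal, so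
`ot b₁ = ω ^ log ω (ot b)`; hence `supp b₁` is the initial segment of `supp b` of that order type,
and `b₁` agrees with `b` there.
-/

theorem Ordinal.IsPrincipal.list_sum_lt {o : Ordinal} (ho : IsPrincipal (· + ·) o) (ho₀ : 0 < o)
    {l : List Ordinal} (hl : ∀ x ∈ l, x < o) : l.sum < o := by
  induction l with
  | nil => exact ho₀
  | cons x l ih =>
    rw [List.forall_mem_cons] at hl
    exact ho hl.1 (ih hl.2)

theorem Ordinal.log_omega0_opow_add {α δ : Ordinal} (hδ : δ < ω ^ (α + 1)) :
    log ω (ω ^ α + δ) = α := by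
  have hα : ω ^ α < ω ^ (α + 1) := (opow_lt_opow_iff_right one_lt_omega0).2 (lt_add_one α)
  rw [log_eq_iff one_lt_omega0 ((opow_pos α omega0_pos).trans_le le_self_add).ne']
  exact ⟨le_self_add, isPrincipal_add_omega0_opow _ hα hδ⟩

section OrderTypeSet

variable {Γ : Type*} [LinearOrder Γ]

theorem orderTypeSet_congr {s t : Set Γ} (h : s = t) (hs : s.IsWF) (ht : t.IsWF) :
    orderTypeSet s hs = orderTypeSet t ht := by
  subst h; rfl

theorem orderTypeSet_mono {s t : Set Γ} (hs : s.IsWF) (ht : t.IsWF) (h : s ⊆ t) :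
    orderTypeSet s hs ≤ orderTypeSet t ht := by
  have : IsWellFounded s (· < ·) := ⟨hs⟩
  have : IsWellFounded t (· < ·) := ⟨ht⟩
  exact Ordinal.type_le_iff'.2 ⟨⟨⟨Set.inclusion h, Set.inclusion_injective h⟩, Iff.rfl⟩⟩

theorem orderTypeSet_eq_zero_iff {s : Set Γ} (hs : s.IsWF) : orderTypeSet s hs = 0 ↔ s = ∅ := by
  have : IsWellFounded s (· < ·) := ⟨hs⟩
  rw [orderTypeSet, Ordinal.type_eq_zero_iff_isEmpty, Set.isEmpty_coe_sort]

theorem orderTypeSet_union {s t : Set Γ} (hs : s.IsWF) (ht : t.IsWF)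
    (hst : ∀ x ∈ s, ∀ y ∈ t, x < y) :
    orderTypeSet (s ∪ t) (hs.union ht) = orderTypeSet s hs + orderTypeSet t ht := by
  classical
  have : IsWellFounded s (· < ·) := ⟨hs⟩
  have : IsWellFounded t (· < ·) := ⟨ht⟩
  have : IsWellFounded ↥(s ∪ t) (· < ·) := ⟨hs.union ht⟩
  have hdisj : Disjoint s t := Set.disjoint_left.2 fun {x} hx hx' => lt_irrefl _ (hst _ hx _ hx')
  rw [orderTypeSet, orderTypeSet, orderTypeSet, ← Ordinal.type_sum_lex]
  refine RelIso.ordinalType_congr ⟨Equiv.Set.union hdisj, ?_⟩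
  rintro ⟨a, ha⟩ ⟨b, hb⟩
  rcases ha.imp id id with ha' | ha' <;> rcases hb.imp id id with hb' | hb'
  · rw [Equiv.Set.union_apply_left hdisj ha', Equiv.Set.union_apply_left hdisj hb']
    simp
  · rw [Equiv.Set.union_apply_left hdisj ha', Equiv.Set.union_apply_right hdisj hb']
    simpa using hst a ha' b hb'
  · rw [Equiv.Set.union_apply_right hdisj ha', Equiv.Set.union_apply_left hdisj hb']
    simpa using (hst b hb' a ha').le
  · rw [Equiv.Set.union_apply_right hdisj ha', Equiv.Set.union_apply_right hdisj hb']
    simp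

theorem orderTypeSet_sep_lt_eq_typein {s : Set Γ} (hs : s.IsWF) {g : Γ} (hg : g ∈ s) :
    letI : IsWellFounded s (· < ·) := ⟨hs⟩
    orderTypeSet {x ∈ s | x < g} (hs.mono (Set.sep_subset _ _)) =
      typein ((· < ·) : s → s → Prop) ⟨g, hg⟩ := by
  have : IsWellFounded s (· < ·) := ⟨hs⟩
  have : IsWellFounded ↥{x ∈ s | x < g} (· < ·) := ⟨hs.mono (Set.sep_subset _ _)⟩
  rw [orderTypeSet, ← Ordinal.type_subrel]
  exact RelIso.ordinalType_congr ⟨Equiv.Set.sep s (· < g), Iff.rfl⟩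

theorem orderTypeSet_sep_lt_lt {s : Set Γ} (hs : s.IsWF) {g : Γ} (hg : g ∈ s) :
    orderTypeSet {x ∈ s | x < g} (hs.mono (Set.sep_subset _ _)) < orderTypeSet s hs := by
  have : IsWellFounded s (· < ·) := ⟨hs⟩
  rw [orderTypeSet_sep_lt_eq_typein hs hg]
  exact typein_lt_type _ _

theorem exists_orderTypeSet_sep_lt_eq {s : Set Γ} (hs : s.IsWF) {o : Ordinal}
    (ho : o < orderTypeSet s hs) :
    ∃ g ∈ s, orderTypeSet {x ∈ s | x < g} (hs.mono (Set.sep_subset _ _)) = o := by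
  have : IsWellFounded s (· < ·) := ⟨hs⟩
  obtain ⟨g, rfl⟩ := typein_surj ((· < ·) : s → s → Prop) ho
  exact ⟨g, g.2, orderTypeSet_sep_lt_eq_typein hs g.2⟩

def IsInitialSegment (u s : Set Γ) : Prop := u ⊆ s ∧ ∀ x ∈ u, ∀ y ∈ s \ u, x < y

theorem IsInitialSegment.orderTypeSet_lt {u s : Set Γ} (hs : s.IsWF) (hu : IsInitialSegment u s)
    {g : Γ} (hg : g ∈ s \ u) : orderTypeSet u (hs.mono hu.1) < orderTypeSet s hs :=
  (orderTypeSet_mono (t := {x ∈ s | x < g}) _ _ fun x hx => ⟨hu.1 hx, hu.2 x hx g hg⟩).trans_lt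
    (orderTypeSet_sep_lt_lt hs hg.1)

theorem IsInitialSegment.subset_of_orderTypeSet_le {u v s : Set Γ} (hs : s.IsWF)
    (hu : IsInitialSegment u s) (hv : IsInitialSegment v s)
    (h : orderTypeSet u (hs.mono hu.1) ≤ orderTypeSet v (hs.mono hv.1)) : u ⊆ v := by
  intro x hx
  by_contra hxv
  have hvu : IsInitialSegment v u := by
    refine ⟨fun z hz => ?_, fun z hz y hy => hv.2 z hz y ⟨hu.1 hy.1, hy.2⟩⟩
    by_contra hzu
    exact (hv.2 z hz x ⟨hu.1 hx, hxv⟩).asymm (hu.2 x hx z ⟨hv.1 hz, hzu⟩)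
  exact (hvu.orderTypeSet_lt (hs.mono hu.1) ⟨hx, hxv⟩).not_ge h

theorem IsInitialSegment.eq_of_orderTypeSet_eq {u v s : Set Γ} (hs : s.IsWF)
    (hu : IsInitialSegment u s) (hv : IsInitialSegment v s)
    (h : orderTypeSet u (hs.mono hu.1) = orderTypeSet v (hs.mono hv.1)) : u = v :=
  (hu.subset_of_orderTypeSet_le hs hv h.le).antisymm (hv.subset_of_orderTypeSet_le hs hu h.ge)

end OrderTypeSet

namespace HahnSeries

variable {Γ : Type*} [LinearOrder Γ] {R : Type*}

section Zero

variable [Zero R] {a b c : HahnSeries Γ R}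

theorem ot_eq_zero_iff : b.ot = 0 ↔ b = 0 := by
  rw [ot, orderTypeSet_eq_zero_iff, support_eq_empty_iff]

theorem ot_mono (h : a.support ⊆ b.support) : a.ot ≤ b.ot :=
  orderTypeSet_mono _ _ h

def SupportLT (a c : HahnSeries Γ R) : Prop := ∀ x ∈ a.support, ∀ y ∈ c.support, x < y

theorem SupportLT.coeff_right_eq_zero (h : SupportLT a c) {x : Γ} (hx : x ∈ a.support) :
    c.coeff x = 0 :=
  not_not.1 fun hx' => lt_irrefl x (h x hx x hx')

theorem SupportLT.coeff_left_eq_zero (h : SupportLT a c) {x : Γ} (hx : x ∈ c.support) :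
    a.coeff x = 0 :=
  not_not.1 fun hx' => lt_irrefl x (h x hx' x hx)

structure IsWeakNormalForm (L : List (HahnSeries Γ R)) : Prop where
  weaklyPrincipal_of_mem : ∀ b ∈ L, weaklyPrincipal b
  pairwise : L.Pairwise fun a c => c.ot ≤ a.ot ∧ SupportLT a c

theorem isWeakNormalForm_ofFn_iff {n : ℕ} {f : Fin n → HahnSeries Γ R} :
    IsWeakNormalForm (List.ofFn f) ↔
      (∀ i, weaklyPrincipal (f i)) ∧ (∀ i j, i ≤ j → (f j).ot ≤ (f i).ot) ∧
        ∀ i j, i < j → SupportLT (f i) (f j) := by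
  constructor
  · rintro ⟨hwp, hpw⟩
    rw [List.forall_mem_ofFn_iff] at hwp
    rw [List.pairwise_ofFn] at hpw
    refine ⟨hwp, fun i j hij => ?_, fun i j hij => (hpw hij).2⟩
    rcases hij.eq_or_lt with rfl | hij
    exacts [le_rfl, (hpw hij).1]
  · rintro ⟨hwp, hle, hlt⟩
    exact ⟨List.forall_mem_ofFn_iff.2 hwp,
      List.pairwise_ofFn.2 fun i j hij => ⟨hle i j hij.le, hlt i j hij⟩⟩

end Zero

section AddMonoid

variable [AddMonoid R] {a c : HahnSeries Γ R}

theorem SupportLT.support_add (h : SupportLT a c) : (a + c).support = a.support ∪ c.support := by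
  refine (support_add_subset a c).antisymm fun x hx => ?_
  rcases hx with hx | hx
  · simpa [mem_support, h.coeff_right_eq_zero hx] using hx
  · simpa [mem_support, h.coeff_left_eq_zero hx] using hx

theorem SupportLT.ot_add (h : SupportLT a c) : (a + c).ot = a.ot + c.ot :=
  (orderTypeSet_congr h.support_add _ _).trans (orderTypeSet_union _ _ h)

theorem SupportLT.isInitialSegment_support_add (h : SupportLT a c) :
    IsInitialSegment a.support (a + c).support := by
  rw [h.support_add]
  exact ⟨Set.subset_union_left, fun x hx y hy => h x hx y (hy.1.resolve_left hy.2)⟩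

theorem SupportLT.coeff_add_left (h : SupportLT a c) {x : Γ} (hx : x ∈ a.support) :
    (a + c).coeff x = a.coeff x := by
  rw [coeff_add, h.coeff_right_eq_zero hx, add_zero]

theorem SupportLT.eq_of_add_eq_add {a' c' : HahnSeries Γ R} (h : SupportLT a c)
    (h' : SupportLT a' c') (heq : a + c = a' + c') (hot : a.ot = a'.ot) : a = a' := by
  have hsupp : a.support = a'.support := by
    have h'' := h'.isInitialSegment_support_add
    rw [← heq] at h''
    exact h.isInitialSegment_support_add.eq_of_orderTypeSet_eq (a + c).isWF_support h'' hot
  ext x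
  by_cases hx : x ∈ a.support
  · rw [← h.coeff_add_left hx, heq, h'.coeff_add_left (hsupp ▸ hx)]
  · have hx' : x ∉ a'.support := hsupp ▸ hx
    rw [mem_support, not_not] at hx hx'
    rw [hx, hx']

end AddMonoid

section AddCommMonoid

variable [AddCommMonoid R] {a : HahnSeries Γ R} {L : List (HahnSeries Γ R)}

theorem support_list_sum (hL : L.Pairwise SupportLT) : L.sum.support = ⋃ c ∈ L, c.support := by
  induction L with
  | nil => simp
  | cons a L ih =>
    rw [List.pairwise_cons] at hL
    have ha : SupportLT a L.sum := by
      intro x hx y hy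
      rw [ih hL.2, Set.mem_iUnion₂] at hy
      obtain ⟨c, hc, hy⟩ := hy
      exact hL.1 c hc x hx y hy
    rw [List.sum_cons, ha.support_add, ih hL.2]
    simp

theorem support_subset_support_list_sum (hL : L.Pairwise SupportLT) (ha : a ∈ L) :
    a.support ⊆ L.sum.support :=
  fun _ hx => by
    rw [support_list_sum hL]
    exact Set.mem_biUnion ha hx

theorem supportLT_list_sum (hL : L.Pairwise SupportLT) (ha : ∀ c ∈ L, SupportLT a c) :
    SupportLT a L.sum := by
  intro x hx y hy
  rw [support_list_sum hL, Set.mem_iUnion₂] at hy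
  obtain ⟨c, hc, hy⟩ := hy
  exact ha c hc x hx y hy

theorem ot_list_sum (hL : L.Pairwise SupportLT) : L.sum.ot = (L.map ot).sum := by
  induction L with
  | nil => simp [ot_eq_zero_iff]
  | cons a L ih =>
    rw [List.pairwise_cons] at hL
    rw [List.sum_cons, (supportLT_list_sum hL.2 hL.1).ot_add, ih hL.2, List.map_cons,
      List.sum_cons]

theorem isWeakNormalForm_cons_iff :
    IsWeakNormalForm (a :: L) ↔
      weaklyPrincipal a ∧ (∀ c ∈ L, c.ot ≤ a.ot ∧ SupportLT a c) ∧ IsWeakNormalForm L := by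
  constructor
  · rintro ⟨hwp, hpw⟩
    rw [List.forall_mem_cons] at hwp
    rw [List.pairwise_cons] at hpw
    exact ⟨hwp.1, hpw.1, hwp.2, hpw.2⟩
  · rintro ⟨ha, hL, hwp, hpw⟩
    exact ⟨List.forall_mem_cons.2 ⟨ha, hwp⟩, List.pairwise_cons.2 ⟨hL, hpw⟩⟩

theorem IsWeakNormalForm.pairwise_supportLT (h : IsWeakNormalForm L) : L.Pairwise SupportLT :=
  h.pairwise.imp And.right

theorem IsWeakNormalForm.supportLT_sum_tail (h : IsWeakNormalForm (a :: L)) :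
    SupportLT a L.sum := by
  obtain ⟨-, hL, hL'⟩ := isWeakNormalForm_cons_iff.1 h
  exact supportLT_list_sum hL'.pairwise_supportLT fun c hc => (hL c hc).2

theorem IsWeakNormalForm.ot_sum_cons (h : IsWeakNormalForm (a :: L)) :
    (a :: L).sum.ot = a.ot + L.sum.ot := by
  rw [List.sum_cons, h.supportLT_sum_tail.ot_add]

theorem IsWeakNormalForm.ot_head (h : IsWeakNormalForm (a :: L)) :
    a.ot = ω ^ log ω (a :: L).sum.ot := by
  obtain ⟨⟨α, hα⟩, hL, hL'⟩ := isWeakNormalForm_cons_iff.1 h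
  have htail : L.sum.ot < ω ^ (α + 1) := by
    rw [ot_list_sum hL'.pairwise_supportLT]
    refine (isPrincipal_add_omega0_opow _).list_sum_lt (opow_pos _ omega0_pos) ?_
    simp only [List.mem_map, forall_exists_index, and_imp, forall_apply_eq_imp_iff₂]
    intro c hc
    exact ((hL c hc).1.trans hα.le).trans_lt
      ((opow_lt_opow_iff_right one_lt_omega0).2 (lt_add_one α))
  rw [h.ot_sum_cons, hα, log_omega0_opow_add htail]

theorem IsWeakNormalForm.sum_ne_zero (h : IsWeakNormalForm (a :: L)) : (a :: L).sum ≠ 0 := by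
  obtain ⟨α, hα⟩ := h.weaklyPrincipal_of_mem a List.mem_cons_self
  rw [Ne, ← ot_eq_zero_iff, h.ot_sum_cons, hα]
  exact fun h0 => opow_ne_zero α omega0_ne_zero (left_eq_zero_of_add_eq_zero h0)

end AddCommMonoid

section AddCommGroup

variable [AddCommGroup R]

theorem IsWeakNormalForm.eq_of_sum_eq {L L' : List (HahnSeries Γ R)} (h : IsWeakNormalForm L)
    (h' : IsWeakNormalForm L') (hsum : L.sum = L'.sum) : L = L' := by
  induction L generalizing L' with
  | nil =>
    cases L' with
    | nil => rfl
    | cons a' M' => exact absurd hsum.symm (h'.sum_ne_zero.trans_eq List.sum_nil.symm)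
  | cons a M ih =>
    cases L' with
    | nil => exact absurd hsum (h.sum_ne_zero.trans_eq List.sum_nil.symm)
    | cons a' M' =>
      have hsum' : a + M.sum = a' + M'.sum := by rwa [List.sum_cons, List.sum_cons] at hsum
      have ha : a = a' := h.supportLT_sum_tail.eq_of_add_eq_add h'.supportLT_sum_tail hsum'
        (by rw [h.ot_head, h'.ot_head, hsum])
      subst ha
      rw [ih (isWeakNormalForm_cons_iff.1 h).2.2 (isWeakNormalForm_cons_iff.1 h').2.2
        (add_left_cancel hsum')]

theorem exists_supportLT_add_eq_of_lt_ot (b : HahnSeries Γ R) {o : Ordinal} (ho : o < b.ot) :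
    ∃ a c : HahnSeries Γ R, SupportLT a c ∧ a + c = b ∧ a.ot = o := by
  classical
  obtain ⟨g, -, hg⟩ := exists_orderTypeSet_sep_lt_eq b.isWF_support ho
  refine ⟨truncLT g b, b - truncLT g b, ?_, add_sub_cancel _ _, ?_⟩
  · intro x hx y hy
    rw [support_truncLT] at hx
    rw [mem_support, coeff_sub, HahnSeries.coeff_truncLT] at hy
    split_ifs at hy with hyg
    · exact absurd (_root_.sub_self _) hy
    · exact hx.2.trans_le (not_lt.1 hyg)
  · exact (orderTypeSet_congr (support_truncLT g b) _ _).trans hg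

theorem exists_isWeakNormalForm (b : HahnSeries Γ R) :
    ∃ L : List (HahnSeries Γ R), IsWeakNormalForm L ∧ L.sum = b := by
  by_cases hb : b = 0
  · exact ⟨[], ⟨by simp, List.Pairwise.nil⟩, hb ▸ List.sum_nil⟩
  by_cases hwp : weaklyPrincipal b
  · exact ⟨[b], ⟨by simpa using hwp, List.pairwise_singleton _ _⟩, List.sum_singleton⟩
  have hb₀ : b.ot ≠ 0 := ot_eq_zero_iff.not.2 hb
  set e := log ω b.ot
  have he : ω ^ e < b.ot := (opow_log_le_self ω hb₀).lt_of_ne fun h => hwp ⟨e, h.symm⟩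
  obtain ⟨a, c, hac, hb_eq, ha⟩ := exists_supportLT_add_eq_of_lt_ot b he
  have hot : b.ot = ω ^ e + c.ot := by rw [← hb_eq, hac.ot_add, ha]
  have hc : c.ot < b.ot :=
    calc c.ot = b.ot - ω ^ e := by rw [hot, Ordinal.add_sub_cancel]
      _ < b.ot := (isLeast_sub_lt_omega0_opow_log hb₀).1
  obtain ⟨L, hL, rfl⟩ := exists_isWeakNormalForm c
  refine ⟨a :: L, isWeakNormalForm_cons_iff.2 ⟨⟨e, ha⟩, fun x hx => ⟨?_, ?_⟩, hL⟩,
    List.sum_cons.trans hb_eq⟩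
  · obtain ⟨β, hβ⟩ := hL.weaklyPrincipal_of_mem x hx
    have hxb : ω ^ β ≤ b.ot := by
      rw [← hβ, hot]
      exact (ot_mono (support_subset_support_list_sum hL.pairwise_supportLT hx)).trans le_add_self
    rw [hβ, ha]
    exact opow_le_opow_right omega0_pos ((opow_le_iff_le_log one_lt_omega0 hb₀).1 hxb)
  · exact fun y hy z hz => hac y hy z (support_subset_support_list_sum hL.pairwise_supportLT hx hz)
termination_by b.ot

end AddCommGroup

end HahnSeries

theorem weak_normal_form_general {G : Type*} [LinearOrder G] {K : Type*} [Field K]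
    (b : HahnSeries G K) (hb : b ≠ 0) :
    ∃! nf : Σ n : ℕ, Fin n → HahnSeries G K,
      1 ≤ nf.1 ∧
      (∀ i, weaklyPrincipal (nf.2 i)) ∧
      (∀ i j : Fin nf.1, i ≤ j → (nf.2 j).ot ≤ (nf.2 i).ot) ∧
      (∀ i j : Fin nf.1, i < j →
        ∀ x ∈ (nf.2 i).support, ∀ y ∈ (nf.2 j).support, x < y) ∧
      ∑ i, nf.2 i = b := by
  obtain ⟨L, hL, rfl⟩ := HahnSeries.exists_isWeakNormalForm b
  obtain ⟨hwp, hle, hlt⟩ := HahnSeries.isWeakNormalForm_ofFn_iff.1 ((List.ofFn_get L).symm ▸ hL)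
  refine ⟨List.equivSigmaTuple L, ⟨?_, hwp, hle, hlt, ?_⟩, ?_⟩
  · exact List.length_pos_iff.2 fun hL₀ => hb (hL₀ ▸ List.sum_nil)
  · exact (List.sum_ofFn (f := L.get)).symm.trans (congrArg List.sum (List.ofFn_get L))
  · rintro ⟨n, f⟩ ⟨-, hwp', hle', hlt', hsum⟩
    refine List.equivSigmaTuple.symm_apply_eq.1 ?_
    refine (HahnSeries.isWeakNormalForm_ofFn_iff.2 ⟨hwp', hle', hlt'⟩).eq_of_sum_eq hL ?_
    rw [List.sum_ofFn, hsum]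

/-- Every nonzero `b ∈ K((G))` has a unique weak normal form: unique `n ≥ 1` and
`b₁, …, bₙ` with each `bᵢ` weakly principal, `ot b₁ ≥ … ≥ ot bₙ`, each element of
`supp bᵢ` strictly below each element of `supp b_{i+1}`, and `b = b₁ + … + bₙ`. -/
theorem weak_normal_form {G : Type*} [AddCommGroup G] [LinearOrder G] [IsOrderedAddMonoid G] {K : Type*} [Field K]
    (b : HahnSeries G K) (hb : b ≠ 0) :
    ∃! nf : Σ n : ℕ, Fin n → HahnSeries G K,
      1 ≤ nf.1 ∧
      (∀ i, weaklyPrincipal (nf.2 i)) ∧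
      (∀ i j : Fin nf.1, i ≤ j → (nf.2 j).ot ≤ (nf.2 i).ot) ∧
      (∀ i j : Fin nf.1, i < j →
        ∀ x ∈ (nf.2 i).support, ∀ y ∈ (nf.2 j).support, x < y) ∧
      ∑ i, nf.2 i = b :=
  weak_normal_form_general b hb
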